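/- Let (X,d) be an unbounded proper length space with basepoint x₀, and let p : X̃ → X be a regular covering map which is a local isometry between length spaces, where X̃ is connected, locally path-connected and proper, and the deck transformations act by isometries of X̃. Fix x̃₀ ∈ p⁻¹(x₀), a nontrivial deck transformation g, and say that a loop c based at x₀ represents g if the lift of c starting at x̃₀ ends at g·x̃₀. Suppose there is a compact set K ⊆ X such that no loop of the form σ ∘ γ ∘ σ⁻¹ represents g, where γ is a loop contained in X∖K and σ is a path from x₀ to γ(0) (i.e. X fails the loops-to-infinity property for g). Then X̃ contains a line, i.e. there exists a map c : ℝ → X̃ with d_{X̃}(c(s),c(t)) = |s−t| for all s,t ∈ ℝ. -/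

import Mathlib

open Set Metric

/-- The length of a curve `γ : ℝ → X`, over the interval `[0,1]`, as its total variation. -/
noncomputable def pathLength {X : Type*} [MetricSpace X] (γ : ℝ → X) : ENNReal :=
  eVariationOn γ (Set.Icc 0 1)

/-- A metric space is a length space if the distance between any two points equals the
infimum of the lengths of continuous paths joining them. -/
def IsLengthSpace (X : Type*) [MetricSpace X] : Prop :=
  ∀ x y : X,
    edist x y =
      ⨅ γ : {γ : ℝ → X // ContinuousOn γ (Set.Icc 0 1) ∧ γ 0 = x ∧ γ 1 = y},
        pathLength γ.1

/-- A map between metric spaces is a local isometry if every point has a neighborhood on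
which the map preserves distances (an isometry onto its image). -/
def IsLocalIsometry {Y X : Type*} [MetricSpace Y] [MetricSpace X] (f : Y → X) : Prop :=
  ∀ y : Y, ∃ ε > 0, ∀ a ∈ ball y ε, ∀ b ∈ ball y ε, dist (f a) (f b) = dist a b

/-!
Take points `y` of the cover lying over points far from `K`. A nearly shortest path from `y` to
`g • y` must pass over `K`: otherwise, conjugated by a path from the base point, its projection
would be a loop outside `K` representing `g`. Both ends of the path lie over the same far point
and `p` is 1-Lipschitz, so the point over `K` splits the path into two long, almost geodesic
halves. Reparametrized by signed arc length, they give almost isometric embeddings of longer and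
longer intervals whose midpoints lie over `K`. Deck transformations move these midpoints into a
fixed bounded set, and a pointwise limit in the proper cover is a line.
-/

open Filter Topology

section Variation

theorem eVariationOn_Icc_le_of_forall_Icc_le {E F : Type*} [PseudoEMetricSpace E]
    [PseudoEMetricSpace F] {f : ℝ → E} {g : ℝ → F} {a b η : ℝ} (hη : 0 < η)
    (h : ∀ u v, a ≤ u → u ≤ v → v ≤ b → v - u ≤ η →
      eVariationOn f (Icc u v) ≤ eVariationOn g (Icc u v)) :
    eVariationOn f (Icc a b) ≤ eVariationOn g (Icc a b) := by
  rcases lt_or_ge b a with hba | hab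
  · simp [Icc_eq_empty_of_lt hba, eVariationOn.subsingleton]
  suffices H : ∀ n : ℕ, ∀ v, a ≤ v → v ≤ b → v - a ≤ n * η →
      eVariationOn f (Icc a v) ≤ eVariationOn g (Icc a v) by
    obtain ⟨n, hn⟩ := exists_nat_ge ((b - a) / η)
    exact H n b hab le_rfl ((div_le_iff₀ hη).1 hn)
  intro n
  induction n with
  | zero => exact fun v hav hvb hv => h a v le_rfl hav hvb (by simp at hv; linarith)
  | succ n ih =>
    intro v hav hvb hv
    rcases le_or_gt (v - a) η with hshort | hlong
    · exact h a v le_rfl hav hvb hshort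
    have hw : a ≤ v - η := by linarith
    have hwv : v - η ≤ v := by linarith
    have hf := eVariationOn.Icc_add_Icc f hw hwv (mem_univ _)
    have hg := eVariationOn.Icc_add_Icc g hw hwv (mem_univ _)
    simp only [univ_inter] at hf hg
    rw [← hf, ← hg]
    push_cast at hv
    exact add_le_add (ih _ hw (by linarith) (by linarith))
      (h _ _ hw (by linarith) hvb (by linarith))

theorem IsLocalIsometry.eVariationOn_comp_le {Y X : Type*} [MetricSpace Y] [MetricSpace X]
    {p : Y → X} (hp : IsLocalIsometry p) {γ : ℝ → Y} {a b : ℝ}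
    (hγ : ContinuousOn γ (Icc a b)) :
    eVariationOn (p ∘ γ) (Icc a b) ≤ eVariationOn γ (Icc a b) := by
  choose r hr hpr using hp
  choose U hUo hU using fun t =>
    _root_.continuousOn_iff'.1 hγ _ (isOpen_ball (x := γ t) (ε := r (γ t)))
  obtain ⟨δ, hδ, hleb⟩ := lebesgue_number_lemma_of_metric isCompact_Icc hUo fun t ht =>
    mem_iUnion.2 ⟨t, ((hU t).le ⟨mem_ball_self (hr _), ht⟩).1⟩
  refine eVariationOn_Icc_le_of_forall_Icc_le (half_pos hδ) fun u v hau huv hvb huv' => ?_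
  obtain ⟨t, ht⟩ := hleb u ⟨hau, huv.trans hvb⟩
  have hmaps : MapsTo γ (Icc u v) (ball (γ t) (r (γ t))) := by
    intro x hx
    have hxab : x ∈ Icc a b := ⟨hau.trans hx.1, hx.2.trans hvb⟩
    have hxu : x ∈ ball u δ := by
      rw [mem_ball, Real.dist_eq, abs_of_nonneg (by linarith [hx.1])]
      linarith [hx.2]
    exact ((hU t).ge ⟨ht hxu, hxab⟩).1
  have hlip : LipschitzOnWith 1 p (ball (γ t) (r (γ t))) :=
    LipschitzOnWith.of_dist_le_mul fun x hx y hy => by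
      rw [hpr _ x hx y hy, NNReal.coe_one, one_mul]
  simpa using hlip.comp_eVariationOn_le hmaps

theorem IsLocalIsometry.lipschitzWith_one {Y X : Type*} [MetricSpace Y] [MetricSpace X]
    {p : Y → X} (hp : IsLocalIsometry p) (hY : IsLengthSpace Y) : LipschitzWith 1 p := by
  refine LipschitzWith.of_edist_le fun a b => ?_
  rw [hY a b]
  refine le_iInf fun ⟨γ, hγ, h0, h1⟩ => ?_
  calc edist (p a) (p b) ≤ eVariationOn (p ∘ γ) (Icc 0 1) := by
        rw [← h0, ← h1]; exact eVariationOn.edist_le _ (by simp) (by simp)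
    _ ≤ pathLength γ := hp.eVariationOn_comp_le hγ

variable {α E : Type*} [LinearOrder α] [PseudoMetricSpace E]

theorem LocallyBoundedVariationOn.dist_le_abs_variationOnFromTo {f : α → E} {s : Set α}
    (hf : LocallyBoundedVariationOn f s) {x y : α} (hx : x ∈ s) (hy : y ∈ s) :
    dist (f x) (f y) ≤ |variationOnFromTo f s x y| := by
  rcases le_total x y with hxy | hyx
  · rw [variationOnFromTo.eq_of_le _ _ hxy, ENNReal.abs_toReal]
    exact (hf x y hx hy).dist_le ⟨hx, le_rfl, hxy⟩ ⟨hy, hxy, le_rfl⟩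
  · rw [variationOnFromTo.eq_of_ge _ _ hyx, abs_neg, ENNReal.abs_toReal, dist_comm]
    exact (hf y x hy hx).dist_le ⟨hy, le_rfl, hyx⟩ ⟨hx, hyx, le_rfl⟩

theorem LocallyBoundedVariationOn.continuousOn_variationOnFromTo [TopologicalSpace α]
    [OrderTopology α] {f : α → E} {s : Set α} (hf : LocallyBoundedVariationOn f s)
    (hc : ContinuousOn f s) {a : α} (ha : a ∈ s) :
    ContinuousOn (variationOnFromTo f s a) s := by
  intro b hb
  have hs : s \ {b} = s ∩ Iio b ∪ s ∩ Ioi b := by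
    ext x; simp only [Set.mem_sdiff, mem_singleton_iff, mem_union, mem_inter_iff, mem_Iio, mem_Ioi,
      ← and_or_left, ← ne_iff_lt_or_gt]
  rw [← continuousWithinAt_sdiff_self, hs]
  refine ContinuousWithinAt.union ?_ ?_
  · simpa [ContinuousWithinAt] using
      variationOnFromTo.tendsto_left ha hb hf ((hc b hb).mono inter_subset_left)
  · simpa [ContinuousWithinAt] using
      variationOnFromTo.tendsto_right ha hb hf ((hc b hb).mono inter_subset_left)

theorem abs_variationOnFromTo_le_dist_add {c : ℝ → E} {a b ε : ℝ} (hε : 0 ≤ ε)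
    (hlen : eVariationOn c (Icc a b) ≤ edist (c a) (c b) + ENNReal.ofReal ε)
    {x y : ℝ} (hx : x ∈ Icc a b) (hy : y ∈ Icc a b) :
    |variationOnFromTo c (Icc a b) x y| ≤ dist (c x) (c y) + ε := by
  wlog hxy : x ≤ y generalizing x y
  · rw [variationOnFromTo.eq_neg_swap, abs_neg, dist_comm]
    exact this hy hx (le_of_not_ge hxy)
  have hbv : LocallyBoundedVariationOn c (Icc a b) :=
    BoundedVariationOn.locallyBoundedVariationOn (ne_top_of_le_ne_top (by finiteness) hlen)
  have ha : a ∈ Icc a b := ⟨le_rfl, hx.1.trans hx.2⟩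
  have hb : b ∈ Icc a b := ⟨hx.1.trans hx.2, le_rfl⟩
  set v := variationOnFromTo c (Icc a b)
  have hvab : v a b ≤ dist (c a) (c b) + ε := by
    have := ENNReal.toReal_mono (by finiteness) hlen
    rwa [ENNReal.toReal_add (edist_ne_top _ _) ENNReal.ofReal_ne_top, ENNReal.toReal_ofReal hε,
      ← dist_edist, ← inter_self (Icc a b), ← variationOnFromTo.eq_of_le _ _ ha.2] at this
  have hsplit : v a x + v x y + v y b = v a b := by
    rw [variationOnFromTo.add hbv ha hx hy, variationOnFromTo.add hbv ha hy hb]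
  have hax : dist (c a) (c x) ≤ v a x := (hbv.dist_le_abs_variationOnFromTo ha hx).trans_eq
    (abs_of_nonneg (variationOnFromTo.nonneg_of_le _ _ hx.1))
  have hyb : dist (c y) (c b) ≤ v y b := (hbv.dist_le_abs_variationOnFromTo hy hb).trans_eq
    (abs_of_nonneg (variationOnFromTo.nonneg_of_le _ _ hy.2))
  rw [abs_of_nonneg (variationOnFromTo.nonneg_of_le _ _ hxy)]
  linarith [dist_triangle4 (c a) (c x) (c y) (c b)]

theorem exists_almostIsometric_of_eVariationOn_le {Y : Type*} [MetricSpace Y] {c : ℝ → Y}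
    {a b ε : ℝ} (hε : 0 ≤ ε) (hc : ContinuousOn c (Icc a b))
    (hlen : eVariationOn c (Icc a b) ≤ edist (c a) (c b) + ENNReal.ofReal ε)
    {t₀ : ℝ} (ht₀ : t₀ ∈ Icc a b) :
    ∃ q : ℝ → Y, q 0 = c t₀ ∧
      ∀ s ∈ Icc (-dist (c a) (c t₀)) (dist (c t₀) (c b)),
      ∀ t ∈ Icc (-dist (c a) (c t₀)) (dist (c t₀) (c b)),
        dist (q s) (q t) ≤ |s - t| ∧ |s - t| ≤ dist (q s) (q t) + ε := by
  have hbv : LocallyBoundedVariationOn c (Icc a b) :=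
    BoundedVariationOn.locallyBoundedVariationOn (ne_top_of_le_ne_top (by finiteness) hlen)
  have ha : a ∈ Icc a b := ⟨le_rfl, ht₀.1.trans ht₀.2⟩
  have hb : b ∈ Icc a b := ⟨ht₀.1.trans ht₀.2, le_rfl⟩
  -- `φ` is a signed arc length parameter centred at `t₀`
  set φ := variationOnFromTo c (Icc a b) t₀
  have hφ : ∀ x ∈ Icc a b, ∀ y ∈ Icc a b,
      dist (c x) (c y) ≤ |φ y - φ x| ∧ |φ y - φ x| ≤ dist (c x) (c y) + ε := fun x hx y hy => by
    rw [variationOnFromTo.sub_right hbv ht₀ hy hx]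
    exact ⟨hbv.dist_le_abs_variationOnFromTo hx hy,
      abs_variationOnFromTo_le_dist_add hε hlen hx hy⟩
  have hφt₀ : φ t₀ = 0 := variationOnFromTo.self _ _ _
  have hφa : φ a ≤ -dist (c a) (c t₀) := by
    have := (hφ a ha t₀ ht₀).1
    rw [hφt₀, zero_sub, abs_neg, abs_of_nonpos (variationOnFromTo.nonpos_of_ge _ _ ht₀.1)] at this
    linarith
  have hφb : dist (c t₀) (c b) ≤ φ b := by
    have := (hφ t₀ ht₀ b hb).1
    rwa [hφt₀, sub_zero, abs_of_nonneg (variationOnFromTo.nonneg_of_le _ _ ht₀.2)] at this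
  have hsurj : ∀ s ∈ Icc (-dist (c a) (c t₀)) (dist (c t₀) (c b)), ∃ τ ∈ Icc a b, φ τ = s :=
    fun s hs => intermediate_value_Icc ha.2 (hbv.continuousOn_variationOnFromTo hc ht₀)
      ⟨hφa.trans hs.1, hs.2.trans hφb⟩
  choose! τ hτ hφτ using hsurj
  have h0 : (0 : ℝ) ∈ Icc (-dist (c a) (c t₀)) (dist (c t₀) (c b)) :=
    ⟨neg_nonpos.2 dist_nonneg, dist_nonneg⟩
  refine ⟨c ∘ τ, dist_le_zero.1 ?_, fun s hs t ht => ?_⟩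
  · simpa [hφτ 0 h0, hφt₀] using (hφ _ (hτ 0 h0) t₀ ht₀).1
  · have := hφ _ (hτ s hs) _ (hτ t ht)
    rwa [hφτ s hs, hφτ t ht, abs_sub_comm t s] at this

end Variation

theorem IsLengthSpace.pathConnectedSpace {X : Type*} [MetricSpace X] [Nonempty X]
    (hX : IsLengthSpace X) : PathConnectedSpace X := by
  refine ⟨‹_›, fun x y => ?_⟩
  have : Nonempty {γ : ℝ → X // ContinuousOn γ (Icc 0 1) ∧ γ 0 = x ∧ γ 1 = y} := by
    by_contra hempty
    rw [not_nonempty_iff] at hempty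
    exact edist_ne_top x y (by rw [hX x y, iInf_of_empty])
  obtain ⟨γ, hγ, h0, h1⟩ := this
  exact ⟨⟨⟨Set.domRestrict _ γ, hγ.domRestrict⟩, h0, h1⟩⟩

theorem IsCoveringMap.isClosed_range {E X : Type*} [TopologicalSpace E] [TopologicalSpace X]
    {p : E → X} (hp : IsCoveringMap p) : IsClosed (range p) := by
  rw [← isOpen_compl_iff, isOpen_iff_forall_mem_open]
  intro x hx
  obtain ⟨-, U, hxU, hU, -, H, -⟩ := hp x
  exact ⟨U, fun x' hx' ⟨e, he⟩ => hx ⟨_, (H ⟨e, show p e ∈ U from he ▸ hx'⟩).2.2⟩, hU, hxU⟩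

theorem IsCoveringMap.surjective {E X : Type*} [TopologicalSpace E] [TopologicalSpace X]
    [Nonempty E] [PreconnectedSpace X] {p : E → X} (hp : IsCoveringMap p) :
    Function.Surjective p :=
  range_eq_univ.1 (IsClopen.eq_univ ⟨hp.isClosed_range, hp.isOpenMap.isOpen_range⟩
    (range_nonempty p))

theorem exists_forall_le_dist_of_not_isBounded {X : Type*} [PseudoMetricSpace X] [Nonempty X]
    (hX : ¬ Bornology.IsBounded (univ : Set X)) {K : Set X} (hK : Bornology.IsBounded K)
    (r : ℝ) : ∃ x, ∀ k ∈ K, r ≤ dist x k := by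
  inhabit X
  obtain ⟨R, hR⟩ := hK.subset_closedBall default
  obtain ⟨x, -, hx⟩ := not_subset.1 fun h => hX (isBounded_closedBall (r := R + r).subset h)
  refine ⟨x, fun k hk => ?_⟩
  have := mem_closedBall.1 (hR hk)
  rw [mem_closedBall, not_le] at hx
  linarith [dist_triangle x k default]

theorem IsCompact.exists_isBounded_forall_exists_smul_mem {Y X G : Type*} [PseudoMetricSpace Y]
    [TopologicalSpace X] [SMul G Y] {p : Y → X} (hpo : IsOpenMap p)
    (hps : Function.Surjective p) (hreg : ∀ y₁ y₂ : Y, p y₁ = p y₂ → ∃ g : G, g • y₁ = y₂)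
    {K : Set X} (hK : IsCompact K) :
    ∃ B : Set Y, Bornology.IsBounded B ∧ ∀ z, p z ∈ K → ∃ g : G, g • z ∈ B := by
  obtain ⟨t, ht⟩ := hK.elim_finite_subcover (fun y => p '' ball y 1)
    (fun y => hpo _ isOpen_ball) fun x _ =>
      let ⟨y, hy⟩ := hps x; mem_iUnion.2 ⟨y, y, mem_ball_self one_pos, hy⟩
  refine ⟨⋃ y ∈ t, ball y 1, (Bornology.isBounded_biUnion_finset t).2 fun _ _ => isBounded_ball,
    fun z hz => ?_⟩
  obtain ⟨y, hyt, w, hw, hwz⟩ := mem_iUnion₂.1 (ht hz)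
  obtain ⟨g, rfl⟩ := hreg z w hwz.symm
  exact ⟨g, mem_iUnion₂.2 ⟨y, hyt, hw⟩⟩

section Loops

variable {Y X : Type*} [TopologicalSpace Y] {p : Y → X}

/-- The loop `σ ∘ γ ∘ σ⁻¹`. -/
noncomputable def conjLoop (σ γ : ℝ → X) : ℝ → X :=
  fun t => if t ≤ 1/3 then σ (3 * t) else if t ≤ 2/3 then γ (3 * t - 1) else σ (3 - 3 * t)

/-- For `b = g • a` this says that the loop `c` represents the deck transformation `g`. -/
def HasLiftFromTo (p : Y → X) (c : ℝ → X) (a b : Y) : Prop :=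
  ∃ ct : ℝ → Y, ContinuousOn ct (Icc 0 1) ∧ (∀ t ∈ Icc (0:ℝ) 1, p (ct t) = c t) ∧
    ct 0 = a ∧ ct 1 = b

theorem hasLiftFromTo_conjLoop {h : Y → Y} (hh : Continuous h) (hph : ∀ y, p (h y) = p y)
    {a b : Y} (σ : Path a b) (γ : Path b (h b)) :
    HasLiftFromTo p (conjLoop (p ∘ σ.extend) (p ∘ γ.extend)) a (h a) := by
  refine ⟨fun t => if t ≤ 1/3 then σ.extend (3 * t) else if t ≤ 2/3 then γ.extend (3 * t - 1)
      else h (σ.extend (3 - 3 * t)), Continuous.continuousOn ?_, fun t _ => ?_, ?_, ?_⟩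
  · refine Continuous.if_le (by fun_prop) (Continuous.if_le (by fun_prop) (by fun_prop)
      (by fun_prop) (by fun_prop) fun t ht => ?_) (by fun_prop) (by fun_prop) fun t ht => ?_
    · rw [ht]; norm_num
    · rw [ht]; norm_num
  · simp only [conjLoop]
    split_ifs <;> simp [hph]
  · norm_num
  · norm_num

theorem exists_proj_mem_of_forall_not_hasLiftFromTo [PathConnectedSpace Y] [TopologicalSpace X]
    (hp : Continuous p) {h : Y → Y} (hh : Continuous h) (hph : ∀ y, p (h y) = p y) {y₀ : Y}
    {K : Set X}
    (hK : ∀ σ γ : ℝ → X, ContinuousOn σ (Icc 0 1) → σ 0 = p y₀ → ContinuousOn γ (Icc 0 1) →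
      γ 0 = σ 1 → γ 1 = σ 1 → (∀ t ∈ Icc (0:ℝ) 1, γ t ∉ K) →
      ¬ HasLiftFromTo p (conjLoop σ γ) y₀ (h y₀))
    (y : Y) (γ : Path y (h y)) : ∃ t, p (γ t) ∈ K := by
  by_contra! hγ
  let σ := PathConnectedSpace.somePath y₀ y
  refine hK (p ∘ σ.extend) (p ∘ γ.extend) (hp.comp σ.continuous_extend).continuousOn (by simp)
    (hp.comp γ.continuous_extend).continuousOn (by simp) (by simp [hph]) (fun t ht => ?_)
    (hasLiftFromTo_conjLoop hh hph σ γ)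
  simpa [Path.extend_apply _ ht] using hγ ⟨t, ht⟩

end Loops

theorem exists_almostLine_centred_over {Y X : Type*} [MetricSpace Y] [PseudoMetricSpace X]
    (hY : IsLengthSpace Y) {p : Y → X} (hp : LipschitzWith 1 p) {h : Y → Y}
    (hph : ∀ y, p (h y) = p y) {K : Set X} (hK : ∀ y (γ : Path y (h y)), ∃ t, p (γ t) ∈ K)
    {r : ℝ} {y : Y} (hy : ∀ k ∈ K, r ≤ dist (p y) k) {ε : ℝ} (hε : 0 < ε) :
    ∃ q : ℝ → Y, p (q 0) ∈ K ∧ ∀ s ∈ Icc (-r) r, ∀ t ∈ Icc (-r) r,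
      dist (q s) (q t) ≤ |s - t| ∧ |s - t| ≤ dist (q s) (q t) + ε := by
  have hlt : ⨅ γ : {γ : ℝ → Y // ContinuousOn γ (Icc 0 1) ∧ γ 0 = y ∧ γ 1 = h y},
      pathLength γ.1 < edist y (h y) + ENNReal.ofReal ε := by
    rw [← hY]
    exact ENNReal.lt_add_right (edist_ne_top _ _) (ENNReal.ofReal_pos.2 hε).ne'
  obtain ⟨⟨c, hc, h0, h1⟩, hlen⟩ := iInf_lt_iff.1 hlt
  obtain ⟨⟨t₀, ht₀⟩, hcK⟩ := hK y ⟨⟨Set.domRestrict _ c, hc.domRestrict⟩, h0, h1⟩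
  change p (c t₀) ∈ K at hcK
  have hfar : ∀ z, p z = p y → r ≤ dist z (c t₀) := fun z hz =>
    (hy _ hcK).trans (by simpa [hz] using hp.dist_le_mul z (c t₀))
  have hA : r ≤ dist (c 0) (c t₀) := hfar _ (by rw [h0])
  have hB : r ≤ dist (c t₀) (c 1) := dist_comm (c 1) (c t₀) ▸ hfar _ (by rw [h1, hph])
  obtain ⟨q, hq0, hq⟩ := exists_almostIsometric_of_eVariationOn_le hε.le hc
    (by rw [h0, h1]; exact hlen.le) ht₀
  have hsub : Icc (-r) r ⊆ Icc (-dist (c 0) (c t₀)) (dist (c t₀) (c 1)) :=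
    Icc_subset_Icc (neg_le_neg hA) hB
  exact ⟨q, hq0 ▸ hcK, fun s hs t ht => hq s (hsub hs) t (hsub ht)⟩

theorem exists_dist_eq_abs_sub_of_almostLines {Y : Type*} [PseudoMetricSpace Y] [ProperSpace Y]
    {B : Set Y} (hB : Bornology.IsBounded B) {q : ℕ → ℝ → Y} (hq0 : ∀ n, q n 0 ∈ B)
    {ε : ℕ → ℝ} (hε : Tendsto ε atTop (𝓝 0))
    (hq : ∀ n : ℕ, ∀ s ∈ Icc (-(n : ℝ)) n, ∀ t ∈ Icc (-(n : ℝ)) n,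
      dist (q n s) (q n t) ≤ |s - t| ∧ |s - t| ≤ dist (q n s) (q n t) + ε n) :
    ∃ c : ℝ → Y, ∀ s t, dist (c s) (c t) = |s - t| := by
  have hmem : ∀ s : ℝ, ∀ᶠ n : ℕ in atTop, s ∈ Icc (-(n : ℝ)) n := fun s =>
    (eventually_ge_atTop ⌈|s|⌉₊).mono fun n hn =>
      abs_le.1 ((Nat.le_ceil _).trans (by exact_mod_cast hn))
  have hdist : ∀ s t, Tendsto (fun n => dist (q n s) (q n t)) atTop (𝓝 |s - t|) := by
    intro s t
    rw [tendsto_iff_dist_tendsto_zero]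
    refine squeeze_zero' (.of_forall fun _ => dist_nonneg) ?_ hε
    filter_upwards [hmem s, hmem t] with n hs ht
    have := hq n s hs t ht
    rw [Real.dist_eq, abs_le]
    constructor <;> linarith
  obtain ⟨R, hR⟩ := hB.subset_closedBall (q 0 0)
  -- the limit is taken along an ultrafilter, so that it exists at every `s` simultaneously
  let 𝒰 := hyperfilter ℕ
  have hlim : ∀ s, ∃ z, Tendsto (fun n => q n s) 𝒰 (𝓝 z) := by
    intro s
    have hball : ∀ᶠ n in atTop, q n s ∈ closedBall (q 0 0) (|s| + 1 + R) := by
      have hnear := (hdist s 0).eventually (gt_mem_nhds (lt_add_one _))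
      filter_upwards [hnear] with n hn
      rw [sub_zero] at hn
      have h0 := mem_closedBall.1 (hR (hq0 n))
      exact mem_closedBall.2 (by linarith [dist_triangle (q n s) (q n 0) (q 0 0)])
    obtain ⟨z, -, hz⟩ := (isCompact_closedBall _ _).ultrafilter_le_nhds (𝒰.map fun n => q n s)
      (le_principal_iff.2 (Nat.hyperfilter_le_atTop hball))
    exact ⟨z, hz⟩
  choose c hc using hlim
  exact ⟨c, fun s t =>
    tendsto_nhds_unique ((hc s).dist (hc t)) ((hdist s t).mono_left Nat.hyperfilter_le_atTop)⟩

theorem stmt_9_general {X Xt : Type*} [MetricSpace X] [MetricSpace Xt]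
    [ProperSpace Xt] [ConnectedSpace Xt] [LocallyPathConnectedSpace Xt]
    (hX : IsLengthSpace X) (hXt : IsLengthSpace Xt)
    (hunb : ¬ Bornology.IsBounded (Set.univ : Set X))
    (x₀ : X)
    (p : Xt → X) (hp : IsCoveringMap p) (hloc : IsLocalIsometry p)
    (G : Type*) [Group G] [MulAction G Xt]
    (hiso : ∀ g : G, Isometry (fun y : Xt => g • y))
    (hdeck : ∀ (g : G) (y : Xt), p (g • y) = p y)
    (hreg : ∀ y₁ y₂ : Xt, p y₁ = p y₂ → ∃ g : G, g • y₁ = y₂)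
    (xt₀ : Xt) (hxt₀ : p xt₀ = x₀)
    (g : G)
    (K : Set X) (hKcpt : IsCompact K)
    (hfail : ∀ σ γ : ℝ → X,
      ContinuousOn σ (Set.Icc 0 1) → σ 0 = x₀ →
      ContinuousOn γ (Set.Icc 0 1) → γ 0 = σ 1 → γ 1 = σ 1 →
      (∀ t ∈ Set.Icc (0:ℝ) 1, γ t ∉ K) →
      ¬ ∃ ct : ℝ → Xt, ContinuousOn ct (Set.Icc 0 1) ∧
          (∀ t ∈ Set.Icc (0:ℝ) 1, p (ct t) =
            (if t ≤ 1/3 then σ (3 * t) else if t ≤ 2/3 then γ (3 * t - 1)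
              else σ (3 - 3 * t))) ∧
          ct 0 = xt₀ ∧ ct 1 = g • xt₀) :
    ∃ c : ℝ → Xt, ∀ s t : ℝ, dist (c s) (c t) = |s - t| := by
  subst hxt₀
  have : Nonempty X := ⟨p xt₀⟩
  have : PathConnectedSpace X := hX.pathConnectedSpace
  have : PathConnectedSpace Xt := pathConnectedSpace_iff_connectedSpace.2 ‹_›
  have hps : Function.Surjective p := hp.surjective
  have hK : ∀ y (γ : Path y (g • y)), ∃ t, p (γ t) ∈ K :=
    exists_proj_mem_of_forall_not_hasLiftFromTo hp.continuous (hiso g).continuous (hdeck g) hfail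
  obtain ⟨B, hB, hKB⟩ := hKcpt.exists_isBounded_forall_exists_smul_mem hp.isOpenMap hps hreg
  have hq : ∀ n : ℕ, ∃ q : ℝ → Xt, q 0 ∈ B ∧ ∀ s ∈ Icc (-(n : ℝ)) n, ∀ t ∈ Icc (-(n : ℝ)) n,
      dist (q s) (q t) ≤ |s - t| ∧ |s - t| ≤ dist (q s) (q t) + 1 / (n + 1) := by
    intro n
    obtain ⟨x, hx⟩ := exists_forall_le_dist_of_not_isBounded hunb hKcpt.isBounded n
    obtain ⟨y, rfl⟩ := hps x
    obtain ⟨q, hqK, hq⟩ := exists_almostLine_centred_over hXt (hloc.lipschitzWith_one hXt) (hdeck g)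
      hK hx (by positivity : (0 : ℝ) < 1 / (n + 1))
    obtain ⟨k, hk⟩ := hKB _ hqK
    exact ⟨fun s => k • q s, hk, fun s hs t ht => by
      simpa only [(hiso k).dist_eq] using hq s hs t ht⟩
  choose q hq0 hq using hq
  exact exists_dist_eq_abs_sub_of_almostLines hB hq0 tendsto_one_div_add_atTop_nhds_zero_nat hq

/-- Sormani-type theorem: if an unbounded proper length space `X` fails the
loops-to-infinity property for a nontrivial deck transformation `g` of a regular covering
`p : Xt → X` which is a local isometry (witnessed by a compact `K ⊆ X` such that no loop
`σ ∘ γ ∘ σ⁻¹` with `γ` a loop in `X∖K` and `σ` a path from `x₀` to `γ(0)` represents `g`),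
then the cover `Xt` contains a line. -/
theorem stmt_9 {X Xt : Type*} [MetricSpace X] [MetricSpace Xt]
    [ProperSpace X] [ProperSpace Xt] [ConnectedSpace Xt] [LocallyPathConnectedSpace Xt]
    (hX : IsLengthSpace X) (hXt : IsLengthSpace Xt)
    (hunb : ¬ Bornology.IsBounded (Set.univ : Set X))
    (x₀ : X)
    (p : Xt → X) (hp : IsCoveringMap p) (hloc : IsLocalIsometry p)
    (G : Type*) [Group G] [MulAction G Xt]
    (hiso : ∀ g : G, Isometry (fun y : Xt => g • y))
    (hdeck : ∀ (g : G) (y : Xt), p (g • y) = p y)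
    (hreg : ∀ y₁ y₂ : Xt, p y₁ = p y₂ → ∃ g : G, g • y₁ = y₂)
    (xt₀ : Xt) (hxt₀ : p xt₀ = x₀)
    (g : G) (hg : g • xt₀ ≠ xt₀)
    (K : Set X) (hKcpt : IsCompact K)
    (hfail : ∀ σ γ : ℝ → X,
      ContinuousOn σ (Set.Icc 0 1) → σ 0 = x₀ →
      ContinuousOn γ (Set.Icc 0 1) → γ 0 = σ 1 → γ 1 = σ 1 →
      (∀ t ∈ Set.Icc (0:ℝ) 1, γ t ∉ K) →
      ¬ ∃ ct : ℝ → Xt, ContinuousOn ct (Set.Icc 0 1) ∧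
          (∀ t ∈ Set.Icc (0:ℝ) 1, p (ct t) =
            (if t ≤ 1/3 then σ (3 * t) else if t ≤ 2/3 then γ (3 * t - 1)
              else σ (3 - 3 * t))) ∧
          ct 0 = xt₀ ∧ ct 1 = g • xt₀) :
    ∃ c : ℝ → Xt, ∀ s t : ℝ, dist (c s) (c t) = |s - t| :=
  stmt_9_general hX hXt hunb x₀ p hp hloc G hiso hdeck hreg xt₀ hxt₀ g K hKcpt hfail
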